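/- arXiv:2106.15913 — 6 statements merged into one kernel-verified Lean document; each statement's English description precedes it below -/
import Mathlib

section
/- Let φ : ℝ → ℝ be monotone non-decreasing and odd (φ(−x) = −φ(x) for all x), and define F(σ) = ∫₀^σ φ(x) dx. Then for all σ₁, σ₂ ∈ ℝ, (σ₁ + σ₂) φ(σ₁) ≥ F(σ₁) − F(σ₂). -/
/-! The primitive `F` of a monotone `φ` is convex with `F' = φ`, so it lies above its tangent
line: `F σ₁ - F t ≤ (σ₁ - t) * φ σ₁`. Oddness of `φ` makes `F` even, and `t = -σ₂` gives the
claim. -/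

open MeasureTheory

theorem Monotone.of_sub_mul_sub_nonneg {φ : ℝ → ℝ}
    (h : ∀ x y : ℝ, (φ x - φ y) * (x - y) ≥ 0) : Monotone φ := by
  intro x y hxy
  rcases hxy.eq_or_lt with rfl | hlt
  · rfl
  · nlinarith [h y x]

theorem intervalIntegral.integral_zero_neg_of_odd {φ : ℝ → ℝ} (hodd : ∀ x, φ (-x) = -φ x)
    (σ : ℝ) : ∫ x in (0:ℝ)..-σ, φ x = ∫ x in (0:ℝ)..σ, φ x := by
  have hneg : ∫ x in (0:ℝ)..σ, φ (-x) = ∫ x in -σ..(0:ℝ), φ x := by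
    simp [intervalIntegral.integral_comp_neg]
  simp only [hodd, intervalIntegral.integral_neg] at hneg
  rw [intervalIntegral.integral_symm, ← hneg, neg_neg]

theorem Monotone.intervalIntegral_le_mul_right {φ : ℝ → ℝ} (hφ : Monotone φ) (a b : ℝ) :
    ∫ x in a..b, φ x ≤ (b - a) * φ b := by
  rcases le_total a b with hab | hba
  · have hle : ∫ x in a..b, φ x ≤ ∫ _ in a..b, φ b :=
      intervalIntegral.integral_mono_on hab hφ.intervalIntegrable intervalIntegrable_const
        fun x hx => hφ hx.2
    simpa [mul_comm] using hle
  · have hge : ∫ _ in b..a, φ b ≤ ∫ x in b..a, φ x :=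
      intervalIntegral.integral_mono_on hba intervalIntegrable_const hφ.intervalIntegrable
        fun x hx => hφ hx.1
    rw [intervalIntegral.integral_const, smul_eq_mul] at hge
    rw [intervalIntegral.integral_symm]
    linarith

theorem convex_gradient_inequality_odd (φ : ℝ → ℝ)
    (hmono : ∀ x y : ℝ, (φ x - φ y) * (x - y) ≥ 0)
    (hodd : ∀ x : ℝ, φ (-x) = -φ x)
    (F : ℝ → ℝ) (hF : ∀ σ : ℝ, F σ = ∫ x in (0:ℝ)..σ, φ x) :
    ∀ σ₁ σ₂ : ℝ, (σ₁ + σ₂) * φ σ₁ ≥ F σ₁ - F σ₂ := by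
  intro σ₁ σ₂
  have hφ : Monotone φ := .of_sub_mul_sub_nonneg hmono
  have hFeven : F σ₂ = F (-σ₂) := by
    rw [hF, hF, intervalIntegral.integral_zero_neg_of_odd hodd]
  have hdiff : F σ₁ - F (-σ₂) = ∫ x in -σ₂..σ₁, φ x := by
    rw [hF, hF, intervalIntegral.integral_interval_sub_left hφ.intervalIntegrable
      hφ.intervalIntegrable]
  have htangent := hφ.intervalIntegral_le_mul_right (-σ₂) σ₁
  rw [hFeven, hdiff]
  linarith
end

section
/- (Area Lemma, monotone case.) Let φ : ℝ → ℝ be monotone non-decreasing with φ(0) = 0 and |φ(σ)| ≤ γ|σ| for all σ ∈ ℝ, for some γ > 0. Let x : ℝ → ℝ be measurable and square-integrable over ℝ (x ∈ L²(ℝ)). Then for every τ ∈ ℝ, ∫_{−∞}^{∞} x(t) φ(x(t)) dt ≥ ∫_{−∞}^{∞} x(t − τ) φ(x(t)) dt. -/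
open MeasureTheory

/-!
With `Φ u = ∫ s in 0..u, φ s`, monotonicity of `φ` makes `Φ` convex with derivative `φ`, so
`b * φ a ≤ a * φ a + Φ b - Φ a` for all `a, b`. Take `a = x t`, `b = x (t - τ)` and integrate:
the terms `∫ Φ (x (t - τ))` and `∫ Φ (x t)` cancel by translation invariance of Lebesgue measure.
The linear bound on `φ` gives `|Φ u| ≤ γ u²`, which makes all integrands integrable for `x ∈ L²`.
-/

theorem monotone_of_forall_sub_mul_sub_nonneg {f : ℝ → ℝ}
    (h : ∀ x y, (f x - f y) * (x - y) ≥ 0) : Monotone f := by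
  intro a b hab
  rcases hab.eq_or_lt with rfl | hlt
  · rfl
  · nlinarith [h b a]

theorem Monotone.sub_mul_le_intervalIntegral {f : ℝ → ℝ} (hf : Monotone f) (a b : ℝ) :
    (b - a) * f a ≤ ∫ s in a..b, f s := by
  rcases le_total a b with hab | hba
  · simpa using intervalIntegral.integral_mono_on hab intervalIntegrable_const
      (hf.intervalIntegrable (μ := volume)) fun s hs => hf hs.1
  · have h := intervalIntegral.integral_mono_on hba (hf.intervalIntegrable (μ := volume))
      (intervalIntegrable_const (c := f a)) fun s hs => hf hs.2
    rw [intervalIntegral.integral_symm]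
    simp only [intervalIntegral.integral_const, smul_eq_mul] at h
    linarith

theorem Monotone.mul_le_mul_add_intervalIntegral {f : ℝ → ℝ} (hf : Monotone f) (a b : ℝ) :
    b * f a ≤ a * f a + ((∫ s in (0 : ℝ)..b, f s) - ∫ s in (0 : ℝ)..a, f s) := by
  rw [intervalIntegral.integral_interval_sub_left hf.intervalIntegrable hf.intervalIntegrable]
  linarith [hf.sub_mul_le_intervalIntegral a b]

theorem Monotone.integral_mul_comp_le {α : Type*} [MeasurableSpace α] {μ : Measure α}
    {f : ℝ → ℝ} (hf : Monotone f) {x y : α → ℝ}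
    (hxf : Integrable (fun t => x t * f (x t)) μ) (hyf : Integrable (fun t => y t * f (x t)) μ)
    (hFx : Integrable (fun t => ∫ s in (0 : ℝ)..x t, f s) μ)
    (hFy : Integrable (fun t => ∫ s in (0 : ℝ)..y t, f s) μ) :
    ∫ t, y t * f (x t) ∂μ ≤
      ∫ t, x t * f (x t) ∂μ +
        ((∫ t, (∫ s in (0 : ℝ)..y t, f s) ∂μ) - ∫ t, (∫ s in (0 : ℝ)..x t, f s) ∂μ) := by
  calc ∫ t, y t * f (x t) ∂μ
      ≤ ∫ t, x t * f (x t) + ((∫ s in (0 : ℝ)..y t, f s) - ∫ s in (0 : ℝ)..x t, f s) ∂μ :=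
        integral_mono hyf (hxf.add (hFy.sub hFx)) fun t =>
          hf.mul_le_mul_add_intervalIntegral (x t) (y t)
    _ = _ := by
      rw [integral_add hxf (by exact hFy.sub hFx), integral_sub hFy hFx]

section LinearGrowth

variable {f : ℝ → ℝ} {C : ℝ}

theorem abs_intervalIntegral_le_mul_sq (hbound : ∀ σ, |f σ| ≤ C * |σ|) (u : ℝ) :
    |∫ s in (0 : ℝ)..u, f s| ≤ C * u ^ 2 := by
  have hC : 0 ≤ C := (abs_nonneg _).trans (by simpa using hbound 1)
  have hle : ∀ s ∈ Set.uIoc 0 u, ‖f s‖ ≤ C * |u| := fun s hs =>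
    (hbound s).trans <| mul_le_mul_of_nonneg_left
      (by simpa using Set.abs_sub_left_of_mem_uIcc (Set.uIoc_subset_uIcc hs)) hC
  simpa [sq, mul_assoc, abs_mul_abs_self] using
    intervalIntegral.norm_integral_le_of_norm_le_const hle

variable {α : Type*} [MeasurableSpace α] {μ : Measure α}
  (hf : Measurable f) (hbound : ∀ σ, |f σ| ≤ C * |σ|)
include hf hbound

theorem MeasureTheory.MemLp.integrable_mul_comp {x y : α → ℝ} (hx : MemLp x 2 μ)
    (hy : MemLp y 2 μ) : Integrable (fun t => y t * f (x t)) μ :=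
  hy.integrable_mul (q := 2) <|
    hx.of_le_mul (hf.comp_aemeasurable hx.aemeasurable).aestronglyMeasurable
      (Filter.Eventually.of_forall fun t => hbound (x t))

theorem MeasureTheory.MemLp.integrable_intervalIntegral_comp {x : α → ℝ} (hx : MemLp x 2 μ) :
    Integrable (fun t => ∫ s in (0 : ℝ)..x t, f s) μ := by
  have hcont : Continuous fun u => ∫ s in (0 : ℝ)..u, f s :=
    intervalIntegral.continuous_primitive (fun a b =>
      ((continuous_const.mul continuous_abs).intervalIntegrable a b).mono_fun'
        hf.aestronglyMeasurable (Filter.Eventually.of_forall hbound)) 0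
  refine (hx.integrable_sq.const_mul C).mono' (hcont.comp_aestronglyMeasurable hx.1) ?_
  exact Filter.Eventually.of_forall fun t => abs_intervalIntegral_le_mul_sq hbound (x t)

end LinearGrowth

theorem area_lemma_monotone_general (φ : ℝ → ℝ)
    (hmono : ∀ x y : ℝ, (φ x - φ y) * (x - y) ≥ 0)
    (γ : ℝ)
    (hbound : ∀ σ : ℝ, |φ σ| ≤ γ * |σ|)
    (x : ℝ → ℝ)
    (hx : MemLp x 2 (volume : Measure ℝ)) :
    ∀ τ : ℝ, (∫ t : ℝ, x t * φ (x t)) ≥ ∫ t : ℝ, x (t - τ) * φ (x t) := by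
  intro τ
  have hφ : Monotone φ := monotone_of_forall_sub_mul_sub_nonneg hmono
  have hxτ : MemLp (fun t => x (t - τ)) 2 volume :=
    hx.comp_measurePreserving (measurePreserving_sub_right volume τ)
  have key := hφ.integral_mul_comp_le
    (hx.integrable_mul_comp hφ.measurable hbound hx)
    (hx.integrable_mul_comp hφ.measurable hbound hxτ)
    (hx.integrable_intervalIntegral_comp hφ.measurable hbound)
    (hxτ.integrable_intervalIntegral_comp hφ.measurable hbound)
  rwa [integral_sub_right_eq_self (fun t => ∫ s in (0 : ℝ)..x t, φ s) τ, sub_self,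
    add_zero] at key

theorem area_lemma_monotone (φ : ℝ → ℝ)
    (hmono : ∀ x y : ℝ, (φ x - φ y) * (x - y) ≥ 0)
    (hzero : φ 0 = 0)
    (γ : ℝ) (hγ : γ > 0)
    (hbound : ∀ σ : ℝ, |φ σ| ≤ γ * |σ|)
    (x : ℝ → ℝ) (hx_meas : Measurable x)
    (hx : MemLp x 2 (volume : Measure ℝ)) :
    ∀ τ : ℝ, (∫ t : ℝ, x t * φ (x t)) ≥ ∫ t : ℝ, x (t - τ) * φ (x t) :=
  area_lemma_monotone_general φ hmono γ hbound x hx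
end

section
/- Let φ : ℝ → ℝ be monotone non-decreasing with φ(0) = 0 and |φ(σ)| ≤ γ|σ| for all σ ∈ ℝ, for some γ > 0. Let x : ℝ → ℝ be measurable and square-integrable over ℝ, and let h : ℝ → ℝ be integrable with h(t) ≥ 0 for all t. Then ∫_{−∞}^{∞} (x(t) − (h ⋆ x)(t)) φ(x(t)) dt ≥ (1 − ∫_{−∞}^{∞} |h(τ)| dτ) · ∫_{−∞}^{∞} x(t) φ(x(t)) dt, where (h ⋆ x)(t) = ∫_{−∞}^{∞} h(τ) x(t − τ) dτ denotes convolution. -/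
/-!
With `Φ σ = ∫₀^σ φ`, monotonicity of `φ` makes `Φ` convex with subgradient `φ`, so
`x(t-τ) φ(x t) ≤ x t φ(x t) - Φ(x t) + Φ(x(t-τ))`. Integrating in `t`, the `Φ` terms cancel by
translation invariance: `∫ x(t-τ) φ(x t) dt ≤ ∫ x φ(x)` for every shift `τ`. Averaging over `τ`
against the nonnegative weight `h` (Fubini) bounds the convolution term by `(∫ h) ∫ x φ(x)`.
-/

open MeasureTheory

noncomputable def potential (φ : ℝ → ℝ) (σ : ℝ) : ℝ := ∫ s in (0 : ℝ)..σ, φ s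

namespace Monotone

variable {φ : ℝ → ℝ}

theorem continuous_potential (hφ : Monotone φ) : Continuous (potential φ) :=
  intervalIntegral.continuous_primitive (fun _ _ => hφ.intervalIntegrable) 0

theorem mul_sub_le_potential_sub (hφ : Monotone φ) (a b : ℝ) :
    φ a * (b - a) ≤ potential φ b - potential φ a := by
  have hdiff : potential φ b - potential φ a - φ a * (b - a) = ∫ s in a..b, (φ s - φ a) := by
    rw [potential, potential, intervalIntegral.integral_interval_sub_left hφ.intervalIntegrable
      hφ.intervalIntegrable, intervalIntegral.integral_sub hφ.intervalIntegrable
      intervalIntegrable_const, intervalIntegral.integral_const, smul_eq_mul, mul_comm]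
  suffices 0 ≤ ∫ s in a..b, (φ s - φ a) by linarith
  rcases le_total a b with hab | hba
  · exact intervalIntegral.integral_nonneg hab fun s hs => sub_nonneg.2 (hφ hs.1)
  · rw [intervalIntegral.integral_symm, ← intervalIntegral.integral_neg]
    exact intervalIntegral.integral_nonneg hba fun s hs => by
      simpa only [neg_sub, sub_nonneg] using hφ hs.2

theorem potential_nonneg (hφ : Monotone φ) (hφ0 : φ 0 = 0) (σ : ℝ) : 0 ≤ potential φ σ := by
  simpa [hφ0, potential] using hφ.mul_sub_le_potential_sub 0 σ

theorem potential_le_mul (hφ : Monotone φ) (σ : ℝ) : potential φ σ ≤ σ * φ σ := by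
  have := hφ.mul_sub_le_potential_sub σ 0
  simp only [potential, intervalIntegral.integral_same] at this ⊢
  linarith

end Monotone

section ShiftInvariant

variable {G : Type*} [MeasurableSpace G] [AddGroup G] [MeasurableAdd G] {μ : Measure G}
  [μ.IsAddRightInvariant]

theorem Monotone.integral_comp_sub_mul_le {φ : ℝ → ℝ} (hφ : Monotone φ) (hφ0 : φ 0 = 0)
    {x : G → ℝ} (hx : AEStronglyMeasurable x μ) (hxφ : Integrable (fun t => x t * φ (x t)) μ)
    (τ : G) (hxτφ : Integrable (fun t => x (t - τ) * φ (x t)) μ) :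
    ∫ t, x (t - τ) * φ (x t) ∂μ ≤ ∫ t, x t * φ (x t) ∂μ := by
  have hΦ : Integrable (fun t => potential φ (x t)) μ := by
    refine hxφ.mono (hφ.continuous_potential.comp_aestronglyMeasurable hx) (.of_forall fun t => ?_)
    rw [Real.norm_of_nonneg (hφ.potential_nonneg hφ0 _)]
    exact (hφ.potential_le_mul _).trans (le_abs_self _)
  have hxφΦ : Integrable (fun t => x t * φ (x t) - potential φ (x t)) μ := hxφ.sub hΦ
  calc ∫ t, x (t - τ) * φ (x t) ∂μ
      ≤ ∫ t, x t * φ (x t) - potential φ (x t) + potential φ (x (t - τ)) ∂μ :=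
        integral_mono hxτφ (hxφΦ.add (hΦ.comp_sub_right τ)) fun t => by
          linarith [hφ.mul_sub_le_potential_sub (x t) (x (t - τ))]
    _ = ∫ t, x t * φ (x t) ∂μ := by
        rw [integral_add hxφΦ (hΦ.comp_sub_right τ), integral_sub hxφ hΦ,
          integral_sub_right_eq_self (fun t => potential φ (x t)) τ, sub_add_cancel]

end ShiftInvariant

section Convolution

variable {G : Type*} [MeasurableSpace G] [AddGroup G] {μ : Measure G} [SFinite μ]
  {h x g : G → ℝ}

theorem integrable_convolution_mul_of_prod
    (hF : Integrable (fun p : G × G => h p.2 * x (p.1 - p.2) * g p.1) (μ.prod μ)) :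
    Integrable (fun t => (∫ τ, h τ * x (t - τ) ∂μ) * g t) μ := by
  simpa only [integral_mul_const] using hF.integral_prod_left

theorem integral_convolution_mul
    (hF : Integrable (fun p : G × G => h p.2 * x (p.1 - p.2) * g p.1) (μ.prod μ)) :
    ∫ t, (∫ τ, h τ * x (t - τ) ∂μ) * g t ∂μ = ∫ τ, h τ * ∫ t, x (t - τ) * g t ∂μ ∂μ := by
  simp_rw [← integral_mul_const, ← integral_const_mul, ← mul_assoc]
  exact integral_integral_swap hF

theorem integrable_convolution_integrand_mul [MeasurableAdd₂ G] [MeasurableNeg G]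
    [μ.IsAddRightInvariant] (hh : Integrable h μ) (hx : MemLp x 2 μ) (hg : MemLp g 2 μ) :
    Integrable (fun p : G × G => h p.2 * x (p.1 - p.2) * g p.1) (μ.prod μ) := by
  have hmeas : AEStronglyMeasurable (fun p : G × G => h p.2 * x (p.1 - p.2) * g p.1) (μ.prod μ) :=
    (hh.1.convolution_integrand (ContinuousLinearMap.mul ℝ ℝ) hx.1).mul hg.1.comp_fst
  have hdom : Integrable (fun p : G × G => ‖h p.2‖ * x (p.1 - p.2) ^ 2 + g p.1 ^ 2 * ‖h p.2‖)
      (μ.prod μ) :=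
    (hh.norm.convolution_integrand (ContinuousLinearMap.mul ℝ ℝ) hx.integrable_sq).add
      (hg.integrable_sq.mul_prod hh.norm)
  refine hdom.mono' hmeas (.of_forall fun p => ?_)
  rw [norm_mul, norm_mul, ← sq_abs (x _), ← sq_abs (g _), ← Real.norm_eq_abs, ← Real.norm_eq_abs]
  nlinarith [mul_le_mul_of_nonneg_left (two_mul_le_add_sq ‖x (p.1 - p.2)‖ ‖g p.1‖)
    (norm_nonneg (h p.2)), mul_nonneg (mul_nonneg (norm_nonneg (h p.2))
    (norm_nonneg (x (p.1 - p.2)))) (norm_nonneg (g p.1))]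

theorem Monotone.integral_convolution_mul_le [MeasurableAdd₂ G] [MeasurableNeg G]
    [μ.IsAddRightInvariant] {φ : ℝ → ℝ} (hφ : Monotone φ) (hφ0 : φ 0 = 0) (hx : MemLp x 2 μ)
    (hφx : MemLp (fun t => φ (x t)) 2 μ) (hh : Integrable h μ) (hh_nonneg : ∀ τ, 0 ≤ h τ) :
    ∫ t, (∫ τ, h τ * x (t - τ) ∂μ) * φ (x t) ∂μ ≤ (∫ τ, h τ ∂μ) * ∫ t, x t * φ (x t) ∂μ := by
  have hF := integrable_convolution_integrand_mul hh hx hφx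
  have hshift (τ : G) : Integrable (fun t => x (t - τ) * φ (x t)) μ :=
    (hx.comp_measurePreserving (measurePreserving_sub_right μ τ)).integrable_mul hφx
  rw [integral_convolution_mul hF, ← integral_mul_const]
  refine integral_mono ?_ (hh.mul_const _) fun τ => mul_le_mul_of_nonneg_left
    (hφ.integral_comp_sub_mul_le hφ0 hx.1 (hx.integrable_mul hφx) τ (hshift τ)) (hh_nonneg τ)
  simpa only [integral_const_mul, mul_assoc] using hF.integral_prod_right

end Convolution

theorem zames_falb_bound_monotone_general (φ : ℝ → ℝ)
    (hmono : ∀ x y : ℝ, (φ x - φ y) * (x - y) ≥ 0)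
    (hzero : φ 0 = 0)
    (γ : ℝ)
    (hbound : ∀ σ : ℝ, |φ σ| ≤ γ * |σ|)
    (x : ℝ → ℝ)
    (hx : MemLp x 2 (volume : Measure ℝ))
    (h : ℝ → ℝ) (hh_int : Integrable h (volume : Measure ℝ))
    (hh_pos : ∀ t : ℝ, h t ≥ 0) :
    (∫ t : ℝ, (x t - ∫ τ : ℝ, h τ * x (t - τ)) * φ (x t)) ≥
      (1 - ∫ τ : ℝ, |h τ|) * ∫ t : ℝ, x t * φ (x t) := by
  have hφ : Monotone φ := fun a b hab => by
    rcases hab.eq_or_lt with rfl | hlt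
    · exact le_rfl
    · nlinarith [hmono b a]
  have hφx : MemLp (fun t => φ (x t)) 2 volume :=
    hx.of_le_mul (hφ.measurable.comp_aemeasurable hx.1.aemeasurable).aestronglyMeasurable
      (.of_forall fun t => by simpa only [Real.norm_eq_abs] using hbound (x t))
  have hconv :=
    integrable_convolution_mul_of_prod (integrable_convolution_integrand_mul hh_int hx hφx)
  calc (∫ t, (x t - ∫ τ, h τ * x (t - τ)) * φ (x t))
      = (∫ t, x t * φ (x t)) - ∫ t, (∫ τ, h τ * x (t - τ)) * φ (x t) := by
        simp_rw [sub_mul]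
        exact integral_sub (hx.integrable_mul hφx) hconv
    _ ≥ (∫ t, x t * φ (x t)) - (∫ τ, h τ) * ∫ t, x t * φ (x t) :=
        sub_le_sub_left (hφ.integral_convolution_mul_le hzero hx hφx hh_int hh_pos) _
    _ = (1 - ∫ τ, |h τ|) * ∫ t, x t * φ (x t) := by
        simp_rw [abs_of_nonneg (hh_pos _)]
        ring

theorem zames_falb_bound_monotone (φ : ℝ → ℝ)
    (hmono : ∀ x y : ℝ, (φ x - φ y) * (x - y) ≥ 0)
    (hzero : φ 0 = 0)
    (γ : ℝ) (hγ : γ > 0)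
    (hbound : ∀ σ : ℝ, |φ σ| ≤ γ * |σ|)
    (x : ℝ → ℝ) (hx_meas : Measurable x)
    (hx : MemLp x 2 (volume : Measure ℝ))
    (h : ℝ → ℝ) (hh_int : Integrable h (volume : Measure ℝ))
    (hh_pos : ∀ t : ℝ, h t ≥ 0) :
    (∫ t : ℝ, (x t - ∫ τ : ℝ, h τ * x (t - τ)) * φ (x t)) ≥
      (1 - ∫ τ : ℝ, |h τ|) * ∫ t : ℝ, x t * φ (x t) :=
  zames_falb_bound_monotone_general φ hmono hzero γ hbound x hx h hh_int hh_pos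
end

section
/- Let φ : ℝ → ℝ be monotone non-decreasing and odd with φ(0) = 0 and |φ(σ)| ≤ γ|σ| for all σ ∈ ℝ, for some γ > 0. Let x : ℝ → ℝ be measurable and square-integrable over ℝ, and let h : ℝ → ℝ be integrable (not necessarily nonnegative). Then ∫_{−∞}^{∞} (x(t) − (h ⋆ x)(t)) φ(x(t)) dt ≥ (1 − ∫_{−∞}^{∞} |h(τ)| dτ) · ∫_{−∞}^{∞} x(t) φ(x(t)) dt, where (h ⋆ x)(t) = ∫_{−∞}^{∞} h(τ) x(t − τ) dτ denotes convolution. -/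
/-!
Let `Φ` be the primitive of `φ` vanishing at `0`. As `φ` is monotone and odd, `Φ` is convex and
even, and Young's inequality reads `|a φ(b)| ≤ (b φ(b) - Φ(b)) + Φ(a)`. Take `a = x(t - τ)`,
`b = x(t)`, weight by `|h(τ)|` and integrate over `(t, τ)`: translation invariance turns
`∫ Φ(x(t - τ)) dt` into `∫ Φ(x(t)) dt`, the `Φ` terms cancel, and
`∫ (h ⋆ x) φ(x) ≤ ‖h‖₁ ∫ x φ(x)`.
-/

open MeasureTheory

theorem monotone_of_sub_mul_sub_nonneg {α : Type*} [Ring α] [LinearOrder α]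
    [IsStrictOrderedRing α] {φ : α → α} (hφ : ∀ x y, (φ x - φ y) * (x - y) ≥ 0) :
    Monotone φ := by
  intro a b hab
  rcases hab.eq_or_lt with rfl | hlt
  · exact le_rfl
  · exact sub_nonneg.1 (nonneg_of_mul_nonneg_left (hφ b a) (sub_pos.2 hlt))

theorem MeasureTheory.MemLp.integrable_mul_comp_of_abs_le {α : Type*} [MeasurableSpace α]
    {μ : Measure α} {x : α → ℝ} {φ : ℝ → ℝ} {γ : ℝ} (hx : MemLp x 2 μ) (hφ : Measurable φ)
    (hbound : ∀ σ, |φ σ| ≤ γ * |σ|) : Integrable (fun t => x t * φ (x t)) μ :=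
  hx.integrable_mul <| hx.of_le_mul (hφ.comp_aemeasurable hx.aemeasurable).aestronglyMeasurable
    (ae_of_all _ fun t => hbound (x t))

noncomputable def primitive (φ : ℝ → ℝ) (u : ℝ) : ℝ := ∫ s in (0 : ℝ)..u, φ s

section Primitive

variable {φ : ℝ → ℝ}

theorem primitive_zero : primitive φ 0 = 0 := intervalIntegral.integral_same

theorem Monotone.continuous_primitive (hφ : Monotone φ) : Continuous (primitive φ) :=
  intervalIntegral.continuous_primitive (fun _ _ => hφ.intervalIntegrable) 0

-- The primitive of a monotone function is convex, so it lies above its tangent lines.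
theorem Monotone.primitive_sub_le (hφ : Monotone φ) (a b : ℝ) :
    primitive φ b - primitive φ a ≤ φ b * (b - a) := by
  rw [primitive, primitive, intervalIntegral.integral_interval_sub_left hφ.intervalIntegrable
    hφ.intervalIntegrable]
  rcases le_total a b with hab | hba
  · calc (∫ s in a..b, φ s) ≤ ∫ _ in a..b, φ b :=
          intervalIntegral.integral_mono_on hab hφ.intervalIntegrable intervalIntegrable_const
            fun s hs => hφ hs.2
      _ = φ b * (b - a) := by rw [intervalIntegral.integral_const, smul_eq_mul, mul_comm]
  · calc (∫ s in a..b, φ s) = -∫ s in b..a, φ s := intervalIntegral.integral_symm b a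
      _ ≤ -∫ _ in b..a, φ b := neg_le_neg <|
          intervalIntegral.integral_mono_on hba intervalIntegrable_const hφ.intervalIntegrable
            fun s hs => hφ hs.1
      _ = φ b * (b - a) := by rw [intervalIntegral.integral_const, smul_eq_mul]; ring

theorem Monotone.primitive_le_mul (hφ : Monotone φ) (u : ℝ) : primitive φ u ≤ u * φ u := by
  simpa [primitive_zero, mul_comm] using hφ.primitive_sub_le 0 u

theorem Function.Odd.primitive_neg (hodd : φ.Odd) (u : ℝ) :
    primitive φ (-u) = primitive φ u := by
  calc primitive φ (-u) = -∫ s in -u..0, φ s := intervalIntegral.integral_symm _ _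
    _ = -∫ s in (0 : ℝ)..u, φ (-s) := by rw [intervalIntegral.integral_comp_neg, neg_zero]
    _ = primitive φ u := by simp only [hodd.eq, intervalIntegral.integral_neg, neg_neg, primitive]

theorem primitive_nonneg (hφ : Monotone φ) (hodd : φ.Odd) (u : ℝ) : 0 ≤ primitive φ u := by
  simpa [primitive_zero, hodd.map_zero] using hφ.primitive_sub_le u 0

theorem abs_mul_le_primitive (hφ : Monotone φ) (hodd : φ.Odd) (a b : ℝ) :
    |a * φ b| ≤ b * φ b - primitive φ b + primitive φ a := by
  have h₁ := hφ.primitive_sub_le a b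
  have h₂ := hφ.primitive_sub_le (-a) b
  rw [hodd.primitive_neg] at h₂
  rw [abs_le]
  constructor <;> linarith

theorem integrable_primitive_comp {α : Type*} [MeasurableSpace α] {μ : Measure α} {x : α → ℝ}
    (hφ : Monotone φ) (hodd : φ.Odd) (hx : AEStronglyMeasurable x μ)
    (hxφ : Integrable (fun t => x t * φ (x t)) μ) : Integrable (fun t => primitive φ (x t)) μ :=
  hxφ.mono' (hφ.continuous_primitive.comp_aestronglyMeasurable hx) <| ae_of_all _ fun t => by
    rw [Real.norm_eq_abs, abs_of_nonneg (primitive_nonneg hφ hodd _)]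
    exact hφ.primitive_le_mul _

end Primitive

section Convolution

variable {G : Type*} [MeasurableSpace G] [AddGroup G] [MeasurableAdd₂ G] [MeasurableNeg G]
  {μ : Measure G} [SFinite μ] [μ.IsAddRightInvariant] {φ Φ : ℝ → ℝ} {x h : G → ℝ}

theorem MeasureTheory.Integrable.comp_sub_mul_prod {f g : G → ℝ} (hf : Integrable f μ)
    (hg : Integrable g μ) : Integrable (fun p : G × G => f (p.1 - p.2) * g p.2) (μ.prod μ) :=
  ((measurePreserving_sub_prod μ μ).integrable_comp (hf.mul_prod hg).aestronglyMeasurable).2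
    (hf.mul_prod hg)

theorem integrable_young_majorant (hxφ : Integrable (fun t => x t * φ (x t)) μ)
    (hΦx : Integrable (fun t => Φ (x t)) μ) (hh : Integrable h μ) :
    Integrable (fun p : G × G => |h p.2| * (x p.1 * φ (x p.1) - Φ (x p.1) + Φ (x (p.1 - p.2))))
      (μ.prod μ) :=
  (((hxφ.sub hΦx).mul_prod hh.abs).add (hΦx.comp_sub_mul_prod hh.abs)).congr
    (ae_of_all _ fun p => by simp only [Pi.add_apply, Pi.sub_apply]; ring)

theorem integral_young_majorant (hxφ : Integrable (fun t => x t * φ (x t)) μ)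
    (hΦx : Integrable (fun t => Φ (x t)) μ) (hh : Integrable h μ) :
    ∫ p : G × G, |h p.2| * (x p.1 * φ (x p.1) - Φ (x p.1) + Φ (x (p.1 - p.2))) ∂μ.prod μ =
      (∫ τ, |h τ| ∂μ) * ∫ t, x t * φ (x t) ∂μ := by
  rw [integral_prod_symm _ (integrable_young_majorant hxφ hΦx hh), ← integral_mul_const]
  refine integral_congr_ae (ae_of_all _ fun τ => ?_)
  have hgap : Integrable (fun t => x t * φ (x t) - Φ (x t)) μ := hxφ.sub hΦx
  have hΦx_shift : Integrable (fun t => Φ (x (t - τ))) μ :=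
    ((measurePreserving_sub_right μ τ).integrable_comp hΦx.aestronglyMeasurable).2 hΦx
  dsimp only
  rw [integral_const_mul, integral_add hgap hΦx_shift,
    integral_sub_right_eq_self (fun t => Φ (x t)) τ, integral_sub hxφ hΦx, mul_comm]
  ring

theorem abs_mul_mul_le_of_young (hYoung : ∀ a b, |a * φ b| ≤ b * φ b - Φ b + Φ a) (c a b : ℝ) :
    |c * a * φ b| ≤ |c| * (b * φ b - Φ b + Φ a) := by
  rw [mul_assoc, abs_mul]
  exact mul_le_mul_of_nonneg_left (hYoung a b) (abs_nonneg c)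

variable (hYoung : ∀ a b, |a * φ b| ≤ b * φ b - Φ b + Φ a) (hφ : Measurable φ)
  (hx : AEStronglyMeasurable x μ) (hxφ : Integrable (fun t => x t * φ (x t)) μ)
  (hΦx : Integrable (fun t => Φ (x t)) μ) (hh : Integrable h μ)
include hYoung hφ hx hxφ hΦx hh

theorem integrable_conv_integrand_mul :
    Integrable (fun p : G × G => h p.2 * x (p.1 - p.2) * φ (x p.1)) (μ.prod μ) := by
  have hx_sub : AEStronglyMeasurable (fun p : G × G => x (p.1 - p.2)) (μ.prod μ) :=
    hx.comp_fst.comp_measurePreserving (measurePreserving_sub_prod μ μ)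
  have hφx : AEStronglyMeasurable (fun t => φ (x t)) μ :=
    (hφ.comp_aemeasurable hx.aemeasurable).aestronglyMeasurable
  exact (integrable_young_majorant hxφ hΦx hh).mono'
    ((hh.aestronglyMeasurable.comp_snd.mul hx_sub).mul hφx.comp_fst)
    (ae_of_all _ fun p => abs_mul_mul_le_of_young hYoung _ _ _)

theorem integrable_conv_mul :
    Integrable (fun t => (∫ τ, h τ * x (t - τ) ∂μ) * φ (x t)) μ := by
  simpa only [integral_mul_const] using
    (integrable_conv_integrand_mul hYoung hφ hx hxφ hΦx hh).integral_prod_left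

theorem integral_conv_mul_le :
    ∫ t, (∫ τ, h τ * x (t - τ) ∂μ) * φ (x t) ∂μ ≤ (∫ τ, |h τ| ∂μ) * ∫ t, x t * φ (x t) ∂μ := by
  have hF := integrable_conv_integrand_mul hYoung hφ hx hxφ hΦx hh
  calc ∫ t, (∫ τ, h τ * x (t - τ) ∂μ) * φ (x t) ∂μ
      = ∫ p : G × G, h p.2 * x (p.1 - p.2) * φ (x p.1) ∂μ.prod μ := by
        simp only [← integral_mul_const]
        exact integral_integral hF
    _ ≤ ∫ p : G × G, |h p.2| * (x p.1 * φ (x p.1) - Φ (x p.1) + Φ (x (p.1 - p.2))) ∂μ.prod μ :=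
        integral_mono hF (integrable_young_majorant hxφ hΦx hh) fun p =>
          (le_abs_self _).trans (abs_mul_mul_le_of_young hYoung _ _ _)
    _ = (∫ τ, |h τ| ∂μ) * ∫ t, x t * φ (x t) ∂μ := integral_young_majorant hxφ hΦx hh

end Convolution

theorem zames_falb_bound_odd_general (φ : ℝ → ℝ)
    (hmono : ∀ x y : ℝ, (φ x - φ y) * (x - y) ≥ 0)
    (hodd : ∀ x : ℝ, φ (-x) = -φ x)
    (γ : ℝ)
    (hbound : ∀ σ : ℝ, |φ σ| ≤ γ * |σ|)
    (x : ℝ → ℝ)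
    (hx : MemLp x 2 (volume : Measure ℝ))
    (h : ℝ → ℝ) (hh_int : Integrable h (volume : Measure ℝ)) :
    (∫ t : ℝ, (x t - ∫ τ : ℝ, h τ * x (t - τ)) * φ (x t)) ≥
      (1 - ∫ τ : ℝ, |h τ|) * ∫ t : ℝ, x t * φ (x t) := by
  have hφ : Monotone φ := monotone_of_sub_mul_sub_nonneg hmono
  have hxφ := hx.integrable_mul_comp_of_abs_le hφ.measurable hbound
  have hΦx := integrable_primitive_comp hφ hodd hx.aestronglyMeasurable hxφ
  have hYoung := abs_mul_le_primitive hφ hodd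
  have hsplit : (∫ t : ℝ, (x t - ∫ τ : ℝ, h τ * x (t - τ)) * φ (x t)) =
      (∫ t : ℝ, x t * φ (x t)) - ∫ t : ℝ, (∫ τ : ℝ, h τ * x (t - τ)) * φ (x t) := by
    rw [← integral_sub hxφ
      (integrable_conv_mul hYoung hφ.measurable hx.aestronglyMeasurable hxφ hΦx hh_int)]
    simp only [sub_mul]
  have hle :=
    integral_conv_mul_le hYoung hφ.measurable hx.aestronglyMeasurable hxφ hΦx hh_int
  rw [ge_iff_le, hsplit]
  linarith

theorem zames_falb_bound_odd (φ : ℝ → ℝ)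
    (hmono : ∀ x y : ℝ, (φ x - φ y) * (x - y) ≥ 0)
    (hodd : ∀ x : ℝ, φ (-x) = -φ x)
    (hzero : φ 0 = 0)
    (γ : ℝ) (hγ : γ > 0)
    (hbound : ∀ σ : ℝ, |φ σ| ≤ γ * |σ|)
    (x : ℝ → ℝ) (hx_meas : Measurable x)
    (hx : MemLp x 2 (volume : Measure ℝ))
    (h : ℝ → ℝ) (hh_int : Integrable h (volume : Measure ℝ)) :
    (∫ t : ℝ, (x t - ∫ τ : ℝ, h τ * x (t - τ)) * φ (x t)) ≥
      (1 - ∫ τ : ℝ, |h τ|) * ∫ t : ℝ, x t * φ (x t) :=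
  zames_falb_bound_odd_general φ hmono hodd γ hbound x hx h hh_int
end

section
/- (Zames–Falb time-domain IQC for odd monotone nonlinearities.) Let φ : ℝ → ℝ be monotone non-decreasing and odd with φ(0) = 0 and |φ(σ)| ≤ γ|σ| for all σ ∈ ℝ, for some γ > 0. Let x : ℝ → ℝ be measurable and square-integrable over ℝ, and let h : ℝ → ℝ be integrable (not necessarily nonnegative) with ∫_{−∞}^{∞} |h(τ)| dτ ≤ 1. Then ∫_{−∞}^{∞} (x(t) − (h ⋆ x)(t)) φ(x(t)) dt ≥ 0, where (h ⋆ x)(t) = ∫_{−∞}^{∞} h(τ) x(t − τ) dτ denotes convolution. -/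
/-!
Let `Φ(a) = ∫₀ᵃ φ`. Monotonicity of `φ` makes `Φ` convex with subgradient `φ a` at `a`, so
`b φ(a) ≤ Φ(b) - Φ(a) + a φ(a)`; oddness of `φ` makes `Φ` even, so the same bound holds for
`|b φ(a)|`. Taking `b = x(t - τ)`, `a = x(t)` and integrating in `t`, the `Φ`-terms cancel by
translation invariance: `|∫ x(t - τ) φ(x t) dt| ≤ ∫ x φ(x)` for every `τ`. By Fubini,
`∫ (h ⋆ x) φ(x) = ∫ h(τ) ∫ x(t - τ) φ(x t) dt dτ ≤ ‖h‖₁ ∫ x φ(x) ≤ ∫ x φ(x)`.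
-/

open MeasureTheory

theorem monotone_of_sub_mul_sub_nonneg_s10 {f : ℝ → ℝ} (hf : ∀ x y : ℝ, (f x - f y) * (x - y) ≥ 0) :
    Monotone f := by
  intro a b hab
  rcases hab.eq_or_lt with rfl | hlt
  · exact le_rfl
  · nlinarith [hf b a]

namespace ZamesFalb

noncomputable def primitive (f : ℝ → ℝ) (a : ℝ) : ℝ := ∫ s in (0 : ℝ)..a, f s

variable {f : ℝ → ℝ}

theorem continuous_primitive (hf : Monotone f) : Continuous (primitive f) :=
  intervalIntegral.continuous_primitive (fun _ _ => hf.intervalIntegrable (μ := volume)) 0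

theorem primitive_zero : primitive f 0 = 0 := intervalIntegral.integral_same

theorem primitive_neg (hodd : ∀ x, f (-x) = -f x) (a : ℝ) : primitive f (-a) = primitive f a := by
  have h := intervalIntegral.integral_comp_neg (a := 0) (b := a) f
  simp only [hodd, intervalIntegral.integral_neg, neg_zero] at h
  rw [primitive, primitive, intervalIntegral.integral_symm, ← h, neg_neg]

theorem sub_mul_le_primitive_sub (hf : Monotone f) (a b : ℝ) :
    (b - a) * f a ≤ primitive f b - primitive f a := by
  have hfi (a b : ℝ) : IntervalIntegrable f volume a b := hf.intervalIntegrable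
  rw [primitive, primitive, intervalIntegral.integral_interval_sub_left (hfi 0 b) (hfi 0 a)]
  rcases le_total a b with hab | hba
  · simpa using intervalIntegral.integral_mono_on hab intervalIntegrable_const (hfi a b)
      fun s hs => hf hs.1
  · have h := intervalIntegral.integral_mono_on hba (hfi b a) intervalIntegrable_const
      fun s hs => hf hs.2
    rw [intervalIntegral.integral_symm]
    simp only [intervalIntegral.integral_const, smul_eq_mul] at h
    linarith

theorem primitive_nonneg (hf : Monotone f) (h0 : f 0 = 0) (a : ℝ) : 0 ≤ primitive f a := by
  simpa [h0, primitive_zero] using sub_mul_le_primitive_sub hf 0 a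

theorem primitive_le_mul_self (hf : Monotone f) (a : ℝ) : primitive f a ≤ a * f a := by
  linarith [sub_mul_le_primitive_sub hf a 0, primitive_zero (f := f)]

theorem abs_mul_le_primitive_sub_add (hf : Monotone f) (hodd : ∀ x, f (-x) = -f x) (a b : ℝ) :
    |b * f a| ≤ primitive f b - primitive f a + a * f a := by
  have hb := sub_mul_le_primitive_sub hf a b
  have hnb := sub_mul_le_primitive_sub hf a (-b)
  rw [primitive_neg hodd] at hnb
  rw [abs_le]
  constructor <;> linarith

theorem abs_integral_comp_mul_le {α : Type*} [MeasurableSpace α] {μ : Measure α}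
    (hf : Monotone f) (hodd : ∀ x, f (-x) = -f x) {T : α → α} (hT : MeasurePreserving T μ μ)
    {u : α → ℝ} (hu : AEStronglyMeasurable u μ)
    (huT : Integrable (fun t => u (T t) * f (u t)) μ)
    (huf : Integrable (fun t => u t * f (u t)) μ) :
    |∫ t, u (T t) * f (u t) ∂μ| ≤ ∫ t, u t * f (u t) ∂μ := by
  have h0 : f 0 = 0 := by linarith [neg_zero (G := ℝ) ▸ hodd 0]
  have hP : Integrable (fun t => primitive f (u t)) μ := by
    refine huf.mono' ((continuous_primitive hf).comp_aestronglyMeasurable hu) (ae_of_all _ ?_)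
    intro t
    rw [Real.norm_eq_abs, abs_of_nonneg (primitive_nonneg hf h0 _)]
    exact primitive_le_mul_self hf _
  have hPT_int : Integrable (fun t => primitive f (u (T t))) μ :=
    hT.integrable_comp_of_integrable hP
  have hPT : ∫ t, primitive f (u (T t)) ∂μ = ∫ t, primitive f (u t) ∂μ := by
    have h := integral_map hT.aemeasurable (hT.map_eq ▸ hP.aestronglyMeasurable)
    rwa [hT.map_eq, eq_comm] at h
  calc |∫ t, u (T t) * f (u t) ∂μ|
      ≤ ∫ t, |u (T t) * f (u t)| ∂μ := abs_integral_le_integral_abs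
    _ ≤ ∫ t, (primitive f (u (T t)) - primitive f (u t) + u t * f (u t)) ∂μ :=
        integral_mono huT.abs ((hPT_int.sub hP).add huf)
          fun t => abs_mul_le_primitive_sub_add hf hodd _ _
    _ = ∫ t, u t * f (u t) ∂μ := by
        rw [integral_add (f := fun t => primitive f (u (T t)) - primitive f (u t))
          (hPT_int.sub hP) huf, integral_sub hPT_int hP, hPT, sub_self, zero_add]

section Correlation

variable {G : Type*} [AddGroup G] [MeasurableSpace G] [MeasurableAdd G]
  {μ : Measure G} [μ.IsAddRightInvariant] {h u g : G → ℝ}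

theorem integrable_comp_sub_mul (hu : MemLp u 2 μ) (hg : MemLp g 2 μ) (τ : G) :
    Integrable (fun t => u (t - τ) * g t) μ :=
  (hu.comp_measurePreserving (measurePreserving_sub_right μ τ)).integrable_mul hg

theorem integral_abs_comp_sub_mul_le (hu : MemLp u 2 μ) (hg : MemLp g 2 μ) (τ : G) :
    ∫ t, |u (t - τ) * g t| ∂μ ≤ (∫ t, u t ^ 2 ∂μ + ∫ t, g t ^ 2 ∂μ) / 2 := by
  have hu2 : Integrable (fun t => u (t - τ) ^ 2) μ := hu.integrable_sq.comp_sub_right τ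
  calc ∫ t, |u (t - τ) * g t| ∂μ ≤ ∫ t, (u (t - τ) ^ 2 + g t ^ 2) / 2 ∂μ := by
        refine integral_mono (integrable_comp_sub_mul hu hg τ).abs
          ((hu2.add hg.integrable_sq).div_const 2) fun t => ?_
        rw [abs_mul]
        nlinarith [sq_abs (u (t - τ)), sq_abs (g t), sq_nonneg (|u (t - τ)| - |g t|)]
    _ = (∫ t, u t ^ 2 ∂μ + ∫ t, g t ^ 2 ∂μ) / 2 := by
        rw [integral_div, integral_add hu2 hg.integrable_sq,
          integral_sub_right_eq_self (fun t => u t ^ 2) τ]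

variable [MeasurableAdd₂ G] [MeasurableNeg G] [SFinite μ]

theorem integrable_mul_comp_sub_mul (hh : Integrable h μ) (hu : MemLp u 2 μ) (hg : MemLp g 2 μ) :
    Integrable (fun p : G × G => h p.2 * u (p.1 - p.2) * g p.1) (μ.prod μ) := by
  have hmeas : AEStronglyMeasurable (fun p : G × G => h p.2 * u (p.1 - p.2) * g p.1) (μ.prod μ) :=
    (hh.1.comp_snd.mul (hu.1.comp_quasiMeasurePreserving
      (quasiMeasurePreserving_sub_of_right_invariant μ μ))).mul hg.1.comp_fst
  refine (integrable_prod_iff' hmeas).2 ⟨ae_of_all _ fun τ => ?_, ?_⟩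
  · simpa only [mul_assoc] using (integrable_comp_sub_mul hu hg τ).const_mul (h τ)
  · refine (hh.norm.mul_const ((∫ t, u t ^ 2 ∂μ + ∫ t, g t ^ 2 ∂μ) / 2)).mono'
      hmeas.norm.prod_swap.integral_prod_right' (ae_of_all _ fun τ => ?_)
    have hb := integral_abs_comp_sub_mul_le hu hg τ
    simp only [abs_mul] at hb
    simp only [norm_mul, mul_assoc, Real.norm_eq_abs, integral_const_mul, abs_abs]
    rw [abs_of_nonneg (integral_nonneg fun t => by positivity)]
    exact mul_le_mul_of_nonneg_left hb (abs_nonneg _)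

theorem integral_sub_convolution_mul (hh : Integrable h μ) (hu : MemLp u 2 μ) (hg : MemLp g 2 μ) :
    ∫ t, (u t - ∫ τ, h τ * u (t - τ) ∂μ) * g t ∂μ
      = ∫ t, u t * g t ∂μ - ∫ τ, h τ * ∫ t, u (t - τ) * g t ∂μ ∂μ := by
  have hF := integrable_mul_comp_sub_mul hh hu hg
  simp_rw [sub_mul, ← integral_mul_const]
  have hconv : Integrable (fun t => ∫ τ, h τ * u (t - τ) * g t ∂μ) μ := hF.integral_prod_left
  have hug : Integrable (fun t => u t * g t) μ := hu.integrable_mul hg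
  rw [integral_sub hug hconv,
    integral_integral_swap (f := fun t τ => h τ * u (t - τ) * g t) hF]
  simp_rw [mul_assoc, integral_const_mul]

end Correlation

theorem integral_mul_le_of_abs_le {α : Type*} [MeasurableSpace α] {μ : Measure α} {h I : α → ℝ}
    {K : ℝ} (hh : Integrable h μ) (hh_norm : ∫ τ, |h τ| ∂μ ≤ 1) (hI : ∀ τ, |I τ| ≤ K)
    (hK : 0 ≤ K) : ∫ τ, h τ * I τ ∂μ ≤ K := by
  by_cases hhI : Integrable (fun τ => h τ * I τ) μ
  · calc ∫ τ, h τ * I τ ∂μ ≤ ∫ τ, |h τ| * K ∂μ :=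
          integral_mono hhI (hh.abs.mul_const K) fun τ => (le_abs_self _).trans <| by
            rw [abs_mul]
            exact mul_le_mul_of_nonneg_left (hI τ) (abs_nonneg _)
      _ = (∫ τ, |h τ| ∂μ) * K := integral_mul_const _ _
      _ ≤ K := mul_le_of_le_one_left hK hh_norm
  · rw [integral_undef hhI]
    exact hK

end ZamesFalb

open ZamesFalb

theorem zames_falb_iqc_odd_general (φ : ℝ → ℝ)
    (hmono : ∀ x y : ℝ, (φ x - φ y) * (x - y) ≥ 0)
    (hodd : ∀ x : ℝ, φ (-x) = -φ x)
    (γ : ℝ)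
    (hbound : ∀ σ : ℝ, |φ σ| ≤ γ * |σ|)
    (x : ℝ → ℝ)
    (hx : MemLp x 2 (volume : Measure ℝ))
    (h : ℝ → ℝ) (hh_int : Integrable h (volume : Measure ℝ))
    (hh_norm : (∫ τ : ℝ, |h τ|) ≤ 1) :
    (∫ t : ℝ, (x t - ∫ τ : ℝ, h τ * x (t - τ)) * φ (x t)) ≥ 0 := by
  have hφ : Monotone φ := monotone_of_sub_mul_sub_nonneg_s10 hmono
  have hφx : MemLp (fun t => φ (x t)) 2 volume :=
    hx.of_le_mul (hφ.measurable.comp_aemeasurable hx.1.aemeasurable).aestronglyMeasurable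
      (ae_of_all _ fun t => by simpa only [Real.norm_eq_abs] using hbound (x t))
  have hcorr (τ : ℝ) : |∫ t, x (t - τ) * φ (x t)| ≤ ∫ t, x t * φ (x t) :=
    abs_integral_comp_mul_le hφ hodd (measurePreserving_sub_right volume τ) hx.1
      (integrable_comp_sub_mul hx hφx τ) (hx.integrable_mul hφx)
  rw [integral_sub_convolution_mul hh_int hx hφx, ge_iff_le, sub_nonneg]
  exact integral_mul_le_of_abs_le hh_int hh_norm hcorr ((abs_nonneg _).trans (hcorr 0))

theorem zames_falb_iqc_odd (φ : ℝ → ℝ)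
    (hmono : ∀ x y : ℝ, (φ x - φ y) * (x - y) ≥ 0)
    (hodd : ∀ x : ℝ, φ (-x) = -φ x)
    (hzero : φ 0 = 0)
    (γ : ℝ) (hγ : γ > 0)
    (hbound : ∀ σ : ℝ, |φ σ| ≤ γ * |σ|)
    (x : ℝ → ℝ) (hx_meas : Measurable x)
    (hx : MemLp x 2 (volume : Measure ℝ))
    (h : ℝ → ℝ) (hh_int : Integrable h (volume : Measure ℝ))
    (hh_norm : (∫ τ : ℝ, |h τ|) ≤ 1) :
    (∫ t : ℝ, (x t - ∫ τ : ℝ, h τ * x (t - τ)) * φ (x t)) ≥ 0 :=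
  zames_falb_iqc_odd_general φ hmono hodd γ hbound x hx h hh_int hh_norm
end

section
/- (Zames–Falb time-domain IQC for slope-restricted nonlinearities.) Let α > 0 and let φ : ℝ → ℝ satisfy φ(0) = 0 and the slope restriction 0 ≤ (φ(x) − φ(y))/(x − y) ≤ α for all x ≠ y. Let v : ℝ → ℝ be measurable and square-integrable over ℝ, and let h : ℝ → ℝ be integrable with h(t) ≥ 0 for all t and ∫ |h| ≤ 1. Define u(t) = v(t) − φ(v(t))/α. Then ∫_{−∞}^{∞} (u(t) − (h ⋆ u)(t)) φ(v(t)) dt ≥ 0, where (h ⋆ u)(t) = ∫_{−∞}^{∞} h(τ) u(t − τ) dτ denotes convolution. -/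
/-!
With `F σ = ∫₀^σ φ`, both `F` and `α σ² / 2 - F` are convex, since their derivatives `φ` and
`α σ - φ σ` are monotone. Combining their tangent-line inequalities shows that the potential
`P σ = F σ - φ σ² / (2α)` satisfies `P x - P y ≤ φ x (ū x - ū y)` with `ū σ = σ - φ σ / α`.
Since `φ 0 = 0`, also `0 ≤ P σ ≤ φ σ ū σ`, so `P ∘ v` is integrable and `∫ u φ(v) ≥ 0`.
Along `v` this gives `P (v t) - P (v (t - τ)) ≤ φ (v t) (u t - u (t - τ))`, and integrating in `t`
(the integral of `P ∘ v` is translation invariant) yields `∫ u (t - τ) φ (v t) ≤ ∫ u φ(v)` for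
every shift `τ`. Averaging over `τ` against `h ≥ 0` with `∫ h ≤ 1` (Fubini) proves the
inequality.
-/

open MeasureTheory

lemma monotone_of_forall_mul_sub_nonneg {f : ℝ → ℝ} (hf : ∀ x y, 0 ≤ (f x - f y) * (x - y)) :
    Monotone f := by
  intro x y hxy
  rcases hxy.eq_or_lt with rfl | hlt
  · rfl
  · nlinarith [hf y x]

lemma lipschitzWith_of_monotone_of_monotone_mul_sub {α : ℝ} (hα : 0 ≤ α) {φ : ℝ → ℝ}
    (hφ : Monotone φ) (hφα : Monotone fun σ => α * σ - φ σ) :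
    LipschitzWith ⟨α, hα⟩ φ := by
  refine LipschitzWith.of_dist_le_mul fun x y => ?_
  change |φ x - φ y| ≤ α * |x - y|
  rcases le_total x y with hxy | hyx
  · rw [abs_sub_comm, abs_of_nonneg (sub_nonneg.2 (hφ hxy)), abs_sub_comm,
      abs_of_nonneg (sub_nonneg.2 hxy)]
    linarith [hφα hxy]
  · rw [abs_of_nonneg (sub_nonneg.2 (hφ hyx)), abs_of_nonneg (sub_nonneg.2 hyx)]
    linarith [hφα hyx]

lemma add_deriv_mul_sub_le_of_monotone {f f' : ℝ → ℝ} (hf : ∀ x, HasDerivAt f (f' x) x)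
    (hf' : Monotone f') (z w : ℝ) : f z + f' z * (w - z) ≤ f w := by
  have hcont : Continuous f := continuous_iff_continuousAt.2 fun x => (hf x).continuousAt
  rcases lt_trichotomy z w with hzw | rfl | hwz
  · obtain ⟨c, hc, hslope⟩ :=
      exists_hasDerivAt_eq_slope f f' hzw hcont.continuousOn fun x _ => hf x
    have := hf' hc.1.le
    rw [hslope, le_div_iff₀ (sub_pos.2 hzw)] at this
    linarith
  · simp
  · obtain ⟨c, hc, hslope⟩ :=
      exists_hasDerivAt_eq_slope f f' hwz hcont.continuousOn fun x _ => hf x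
    have := hf' hc.2.le
    rw [hslope, div_le_iff₀ (sub_pos.2 hwz)] at this
    linarith

noncomputable def slopePotential (α : ℝ) (φ : ℝ → ℝ) (σ : ℝ) : ℝ :=
  (∫ s in (0 : ℝ)..σ, φ s) - φ σ ^ 2 / (2 * α)

section SlopePotential

variable {α : ℝ} {φ : ℝ → ℝ}

lemma continuous_slopePotential (hφ : Continuous φ) : Continuous (slopePotential α φ) :=
  (intervalIntegral.continuous_primitive (fun a b => hφ.intervalIntegrable a b) 0).sub
    ((hφ.pow 2).div_const _)

lemma slopePotential_sub_le (hα : 0 < α) (hφ : Monotone φ)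
    (hφα : Monotone fun σ => α * σ - φ σ) (x y : ℝ) :
    slopePotential α φ x - slopePotential α φ y ≤ φ x * ((x - φ x / α) - (y - φ y / α)) := by
  have hcont := (lipschitzWith_of_monotone_of_monotone_mul_sub hα.le hφ hφα).continuous
  set F := fun σ => ∫ s in (0 : ℝ)..σ, φ s
  have hF : ∀ σ, HasDerivAt F (φ σ) σ := fun σ =>
    (hcont.integral_hasStrictDerivAt 0 σ).hasDerivAt
  have hQF : ∀ σ, HasDerivAt (fun σ => α * σ ^ 2 / 2 - F σ) (α * σ - φ σ) σ := fun σ =>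
    ((((hasDerivAt_pow 2 σ).const_mul α).div_const 2).sub (hF σ)).congr_deriv (by ring)
  -- `w` is the gradient step from `y` for `σ ↦ F σ - φ x * σ`, as in the usual proof of
  -- co-coercivity of a convex function with `α`-Lipschitz derivative.
  set w := y - (φ y - φ x) / α
  have hx := add_deriv_mul_sub_le_of_monotone hF hφ x w
  have hy := add_deriv_mul_sub_le_of_monotone hQF hφα y w
  simp only [slopePotential, F, w] at hx hy ⊢
  field_simp at hx hy ⊢
  linarith

lemma slopePotential_zero (hzero : φ 0 = 0) : slopePotential α φ 0 = 0 := by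
  simp [slopePotential, hzero]

lemma slopePotential_nonneg (hα : 0 < α) (hφ : Monotone φ)
    (hφα : Monotone fun σ => α * σ - φ σ) (hzero : φ 0 = 0) (σ : ℝ) :
    0 ≤ slopePotential α φ σ := by
  have := slopePotential_sub_le hα hφ hφα 0 σ
  rw [slopePotential_zero hzero, hzero] at this
  linarith

lemma slopePotential_le_mul (hα : 0 < α) (hφ : Monotone φ)
    (hφα : Monotone fun σ => α * σ - φ σ) (hzero : φ 0 = 0) (σ : ℝ) :
    slopePotential α φ σ ≤ φ σ * (σ - φ σ / α) := by
  have := slopePotential_sub_le hα hφ hφα σ 0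
  rw [slopePotential_zero hzero, hzero] at this
  simpa using this

end SlopePotential

section Shift

variable {a b g h : ℝ → ℝ}

lemma integral_comp_sub_mul_le (ha : MemLp a 2 volume) (hb : MemLp b 2 volume)
    (hg : Integrable g volume) (hgab : ∀ s t, g t - g s ≤ b t * (a t - a s)) (τ : ℝ) :
    ∫ t, a (t - τ) * b t ≤ ∫ t, a t * b t := by
  have hab : Integrable (fun t => a t * b t) volume := ha.integrable_mul hb
  have haτ : Integrable (fun t => a (t - τ) * b t) volume :=
    (ha.comp_measurePreserving (measurePreserving_sub_right volume τ)).integrable_mul hb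
  have hgτ : Integrable (fun t => g t - g (t - τ)) volume := hg.sub (hg.comp_sub_right τ)
  calc ∫ t, a (t - τ) * b t
      ≤ ∫ t, (a t * b t - (g t - g (t - τ))) :=
        integral_mono haτ (hab.sub hgτ) fun t => by linarith [hgab (t - τ) t]
    _ = ∫ t, a t * b t := by
        rw [integral_sub hab hgτ, integral_sub hg (hg.comp_sub_right τ),
          integral_sub_right_eq_self, sub_self, sub_zero]

lemma integrable_convolution_integrand_mul_s15 (ha : MemLp a 2 volume) (hb : MemLp b 2 volume)
    (hh : Integrable h volume) :
    Integrable (fun p : ℝ × ℝ => h p.2 * (a (p.1 - p.2) * b p.1)) (volume.prod volume) := by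
  have hsub := measurePreserving_sub_prod (volume : Measure ℝ) volume
  have ha' : Integrable (fun p : ℝ × ℝ => a (p.1 - p.2) ^ 2 * |h p.2|) (volume.prod volume) :=
    (hsub.integrable_comp (ha.integrable_sq.mul_prod hh.abs).1).2
      (ha.integrable_sq.mul_prod hh.abs)
  have hb' : Integrable (fun p : ℝ × ℝ => b p.1 ^ 2 * |h p.2|) (volume.prod volume) :=
    hb.integrable_sq.mul_prod hh.abs
  refine ((ha'.add hb').div_const 2).mono' ?_ (Filter.Eventually.of_forall fun p => ?_)
  · exact hh.1.comp_snd.mul ((ha.1.comp_fst.comp_measurePreserving hsub).mul hb.1.comp_fst)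
  · simp only [Pi.add_apply, Real.norm_eq_abs, abs_mul]
    nlinarith [sq_nonneg (|a (p.1 - p.2)| - |b p.1|), sq_abs (a (p.1 - p.2)), sq_abs (b p.1),
      abs_nonneg (h p.2)]

lemma integral_sub_convolution_mul_nonneg (ha : MemLp a 2 volume) (hb : MemLp b 2 volume)
    (hh : Integrable h volume) (hh_nonneg : ∀ t, 0 ≤ h t) (hh_le : ∫ t, h t ≤ 1)
    (hab : 0 ≤ ∫ t, a t * b t) (hshift : ∀ τ, ∫ t, a (t - τ) * b t ≤ ∫ t, a t * b t) :
    0 ≤ ∫ t, (a t - ∫ τ, h τ * a (t - τ)) * b t := by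
  have hF := integrable_convolution_integrand_mul_s15 ha hb hh
  have hconv_int : Integrable (fun t => (∫ τ, h τ * a (t - τ)) * b t) volume := by
    refine hF.integral_prod_left.congr (Filter.Eventually.of_forall fun t => ?_)
    simp only [← mul_assoc, integral_mul_const]
  have hshift_int : Integrable (fun τ => h τ * ∫ t, a (t - τ) * b t) volume := by
    refine hF.integral_prod_right.congr (Filter.Eventually.of_forall fun τ => ?_)
    exact integral_const_mul (h τ) _
  have hconv : ∫ t, (∫ τ, h τ * a (t - τ)) * b t = ∫ τ, h τ * ∫ t, a (t - τ) * b t := by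
    simp_rw [← integral_mul_const, mul_assoc, ← integral_const_mul]
    exact integral_integral_swap hF
  have hle : ∫ τ, h τ * ∫ t, a (t - τ) * b t ≤ (∫ τ, h τ) * ∫ t, a t * b t := by
    rw [← integral_mul_const]
    exact integral_mono hshift_int (hh.mul_const _) fun τ =>
      mul_le_mul_of_nonneg_left (hshift τ) (hh_nonneg τ)
  calc 0 ≤ (∫ t, a t * b t) - (∫ τ, h τ) * ∫ t, a t * b t := by
        nlinarith [mul_le_mul_of_nonneg_right hh_le hab]
    _ ≤ (∫ t, a t * b t) - ∫ t, (∫ τ, h τ * a (t - τ)) * b t := by rw [hconv]; linarith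
    _ = ∫ t, (a t - ∫ τ, h τ * a (t - τ)) * b t := by
        rw [← integral_sub (f := fun t => a t * b t) (ha.integrable_mul hb) hconv_int]
        simp only [sub_mul]

end Shift

theorem zames_falb_iqc_slope_restricted_general (α : ℝ) (hα : α > 0) (φ : ℝ → ℝ)
    (hzero : φ 0 = 0)
    (hslope : ∀ x y : ℝ,
      0 ≤ (φ x - φ y) * (x - y) ∧ (φ x - φ y) * (x - y) ≤ α * (x - y) ^ 2)
    (v : ℝ → ℝ)
    (hv : MemLp v 2 (volume : Measure ℝ))
    (h : ℝ → ℝ) (hh_int : Integrable h (volume : Measure ℝ))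
    (hh_pos : ∀ t : ℝ, h t ≥ 0)
    (hh_norm : (∫ τ : ℝ, |h τ|) ≤ 1)
    (u : ℝ → ℝ) (hu : ∀ t : ℝ, u t = v t - φ (v t) / α) :
    (∫ t : ℝ, (u t - ∫ τ : ℝ, h τ * u (t - τ)) * φ (v t)) ≥ 0 := by
  obtain rfl : u = fun t => v t - φ (v t) / α := funext hu
  have hφ : Monotone φ := monotone_of_forall_mul_sub_nonneg fun x y => (hslope x y).1
  have hφα : Monotone fun σ => α * σ - φ σ :=
    monotone_of_forall_mul_sub_nonneg fun x y => by nlinarith [(hslope x y).2]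
  have hφ_lip := lipschitzWith_of_monotone_of_monotone_mul_sub hα.le hφ hφα
  have hφv : MemLp (fun t => φ (v t)) 2 volume := hφ_lip.comp_memLp hzero hv
  have hu2 : MemLp (fun t => v t - φ (v t) / α) 2 volume := by
    simpa only [div_eq_inv_mul, Pi.sub_def] using hv.sub (hφv.const_mul α⁻¹)
  have hP : ∀ t, 0 ≤ slopePotential α φ (v t) ∧
      slopePotential α φ (v t) ≤ (v t - φ (v t) / α) * φ (v t) := fun t =>
    ⟨slopePotential_nonneg hα hφ hφα hzero (v t),
      (slopePotential_le_mul hα hφ hφα hzero (v t)).trans_eq (mul_comm _ _)⟩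
  have hPv : Integrable (fun t => slopePotential α φ (v t)) volume := by
    refine (hu2.integrable_mul hφv).mono' ?_ (Filter.Eventually.of_forall fun t => ?_)
    · exact (continuous_slopePotential hφ_lip.continuous).comp_aestronglyMeasurable hv.1
    · rw [Real.norm_eq_abs, abs_of_nonneg (hP t).1]
      exact (hP t).2
  have hh_le : ∫ τ, h τ ≤ 1 := by
    simpa only [abs_of_nonneg (hh_pos _)] using hh_norm
  exact integral_sub_convolution_mul_nonneg hu2 hφv hh_int hh_pos hh_le
    (integral_nonneg fun t => (hP t).1.trans (hP t).2)
    (integral_comp_sub_mul_le hu2 hφv hPv fun s t => slopePotential_sub_le hα hφ hφα (v t) (v s))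

theorem zames_falb_iqc_slope_restricted (α : ℝ) (hα : α > 0) (φ : ℝ → ℝ)
    (hzero : φ 0 = 0)
    (hslope : ∀ x y : ℝ,
      0 ≤ (φ x - φ y) * (x - y) ∧ (φ x - φ y) * (x - y) ≤ α * (x - y) ^ 2)
    (v : ℝ → ℝ) (hv_meas : Measurable v)
    (hv : MemLp v 2 (volume : Measure ℝ))
    (h : ℝ → ℝ) (hh_int : Integrable h (volume : Measure ℝ))
    (hh_pos : ∀ t : ℝ, h t ≥ 0)
    (hh_norm : (∫ τ : ℝ, |h τ|) ≤ 1)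
    (u : ℝ → ℝ) (hu : ∀ t : ℝ, u t = v t - φ (v t) / α) :
    (∫ t : ℝ, (u t - ∫ τ : ℝ, h τ * u (t - τ)) * φ (v t)) ≥ 0 :=
  zames_falb_iqc_slope_restricted_general α hα φ hzero hslope v hv h hh_int hh_pos hh_norm u hu
end
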